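/- Let k, h ∈ ℕ⁺, K = k + h, and let A ∈ ℝ^{m×N} satisfy the (K, δ_K)-RIP with 0 < δ_K < 1. Then A has the Null Space Property of order k with constant γ_k = √(k/h) · (1+δ_K)/(1−δ_K). -/

import Mathlib

open Finset

/-- ℓ¹ norm of a vector. -/
noncomputable def l1 {N : ℕ} (x : Fin N → ℝ) : ℝ := ∑ i, |x i|

/-- ℓ² norm of a vector. -/
noncomputable def l2 {n : ℕ} (x : Fin n → ℝ) : ℝ := Real.sqrt (∑ i, (x i) ^ 2)

/-- Restriction of a vector to an index set (zero off the set). -/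
noncomputable def restr {N : ℕ} (Λ : Finset (Fin N)) (x : Fin N → ℝ) : Fin N → ℝ :=
  fun i => if i ∈ Λ then x i else 0

/-- Support of a vector as a finset. -/
noncomputable def supp {N : ℕ} (z : Fin N → ℝ) : Finset (Fin N) :=
  univ.filter (fun i => z i ≠ 0)

/-- Null Space Property of order `k` with constant `γ`. -/
def NSP {m N : ℕ} (A : Matrix (Fin m) (Fin N) ℝ) (k : ℕ) (γ : ℝ) : Prop :=
  ∀ z : Fin N → ℝ, A.mulVec z = 0 → ∀ Λ : Finset (Fin N), Λ.card ≤ k →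
    l1 (restr Λ z) ≤ γ * l1 (restr Λᶜ z)

/-- Restricted Isometry Property of order `K` with constant `δ` (norm version). -/
noncomputable def RIP {m N : ℕ} (A : Matrix (Fin m) (Fin N) ℝ) (K : ℕ) (δ : ℝ) : Prop :=
  ∀ z : Fin N → ℝ, (supp z).card ≤ K →
    (1 - δ) * l2 z ≤ l2 (A.mulVec z) ∧ l2 (A.mulVec z) ≤ (1 + δ) * l2 z

/-- ℓ¹ best `k`-term approximation error. -/
noncomputable def sigma1 {N : ℕ} (k : ℕ) (x : Fin N → ℝ) : ℝ :=
  sInf {t : ℝ | ∃ z : Fin N → ℝ, (supp z).card ≤ k ∧ t = l1 (x - z)}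

/-- Index set of entries exceeding `r` in absolute value. -/
noncomputable def Sr {N : ℕ} (r : ℝ) (x : Fin N → ℝ) : Finset (Fin N) :=
  univ.filter (fun i => r < |x i|)

/-- The Hölder constant κ_p(N,k). -/
noncomputable def kappa (p : ℝ) (N k : ℕ) : ℝ :=
  if p = 1 then 1 else ((N - k : ℕ) : ℝ) ^ (1 - 1 / p)

/-- Membership in the class 𝒮^p_{η,k,r} of sparse vectors affected by bounded noise. -/
noncomputable def inClass {N : ℕ} (p η : ℝ) (k : ℕ) (r : ℝ) (x : Fin N → ℝ) : Prop :=
  (Sr r x).card ≤ k ∧ ∑ i ∈ (Sr r x)ᶜ, |x i| ^ p ≤ η ^ p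

/-- Entrywise hard thresholding with threshold `t`. -/
noncomputable def hardThr {N : ℕ} (t : ℝ) (z : Fin N → ℝ) : Fin N → ℝ :=
  fun i => if t < |z i| then z i else 0

/-!
Let `z ∈ ker A`, `#Λ ≤ k`, let `T` consist of the `h` largest entries of `z` off `Λ`, and
`W = Λ ∪ T`. By Cauchy–Schwarz and the lower RIP bound,
`‖z_Λ‖₁ ≤ √k ‖z_W‖₂ ≤ √k ‖A z_W‖₂ / (1 - δ)`, and `A z_W = -A z_{Wᶜ}`. Cutting `Wᶜ` into
successive blocks of the `h` largest remaining entries, every entry of a block is at most the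
mean modulus of the previous block, so the block's `ℓ²` norm is at most the previous block's
`ℓ¹` norm divided by `√h`. The upper RIP bound on each block and the triangle inequality give
`√h ‖A z_{Wᶜ}‖₂ ≤ (1 + δ) ‖z_{Λᶜ}‖₁`.
-/

lemma l1_nonneg {N : ℕ} (x : Fin N → ℝ) : 0 ≤ l1 x :=
  Finset.sum_nonneg fun _ _ => abs_nonneg _

lemma l2_eq_norm {n : ℕ} (x : Fin n → ℝ) : l2 x = ‖WithLp.toLp 2 x‖ := by
  simp [l2, EuclideanSpace.norm_eq, sq_abs]

lemma l2_add_le {n : ℕ} (x y : Fin n → ℝ) : l2 (x + y) ≤ l2 x + l2 y := by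
  simpa only [l2_eq_norm, WithLp.toLp_add] using norm_add_le _ _

lemma l2_zero {n : ℕ} : l2 (0 : Fin n → ℝ) = 0 := by simp [l2]

lemma l2_neg {n : ℕ} (x : Fin n → ℝ) : l2 (-x) = l2 x := by simp [l2]

section restr

variable {N : ℕ}

lemma restr_empty (v : Fin N → ℝ) : restr ∅ v = 0 := by
  funext i; simp [restr]

lemma restr_add_restr_compl (S : Finset (Fin N)) (v : Fin N → ℝ) :
    restr S v + restr Sᶜ v = v := by
  funext i; by_cases hi : i ∈ S <;> simp [restr, hi]

lemma restr_add_restr_sdiff {S T : Finset (Fin N)} (hTS : T ⊆ S) (v : Fin N → ℝ) :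
    restr T v + restr (S \ T) v = restr S v := by
  funext i
  by_cases hiT : i ∈ T
  · simp [restr, hiT, hTS hiT]
  · by_cases hiS : i ∈ S <;> simp [restr, hiT, hiS]

lemma card_supp_restr_le (S : Finset (Fin N)) (v : Fin N → ℝ) :
    (supp (restr S v)).card ≤ S.card := by
  refine card_le_card fun i hi => ?_
  by_contra hiS
  simp [supp, restr, hiS] at hi

lemma l1_restr (S : Finset (Fin N)) (v : Fin N → ℝ) : l1 (restr S v) = ∑ i ∈ S, |v i| := by
  simp [l1, restr, apply_ite abs, sum_ite_mem]

lemma l1_restr_add_restr_sdiff {S T : Finset (Fin N)} (hTS : T ⊆ S) (v : Fin N → ℝ) :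
    l1 (restr T v) + l1 (restr (S \ T) v) = l1 (restr S v) := by
  simp only [l1_restr, sum_sdiff hTS, add_comm (∑ i ∈ T, |v i|)]

lemma l2_restr (S : Finset (Fin N)) (v : Fin N → ℝ) :
    l2 (restr S v) = Real.sqrt (∑ i ∈ S, v i ^ 2) := by
  simp [l2, restr, apply_ite (· ^ 2), sum_ite_mem]

lemma l2_restr_mono {S T : Finset (Fin N)} (hST : S ⊆ T) (v : Fin N → ℝ) :
    l2 (restr S v) ≤ l2 (restr T v) := by
  simp only [l2_restr]
  exact Real.sqrt_le_sqrt (sum_le_sum_of_subset_of_nonneg hST fun _ _ _ => sq_nonneg _)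

lemma l1_restr_le_sqrt_card_mul_l2_restr (S : Finset (Fin N)) (v : Fin N → ℝ) :
    l1 (restr S v) ≤ Real.sqrt S.card * l2 (restr S v) := by
  rw [l1_restr, l2_restr, ← Real.sqrt_mul (Nat.cast_nonneg _)]
  refine Real.le_sqrt_of_sq_le ?_
  simpa only [sq_abs] using sq_sum_le_card_mul_sum_sq (s := S) (f := fun i => |v i|)

lemma l2_restr_le_sqrt_card_mul {S : Finset (Fin N)} {v : Fin N → ℝ} {b : ℝ}
    (hb : 0 ≤ b) (hbv : ∀ i ∈ S, |v i| ≤ b) : l2 (restr S v) ≤ Real.sqrt S.card * b := by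
  have hsum : ∑ i ∈ S, v i ^ 2 ≤ S.card * b ^ 2 := by
    simpa only [sum_const, nsmul_eq_mul] using
      sum_le_sum fun i hi => sq_le_sq' (abs_le.mp (hbv i hi)).1 (abs_le.mp (hbv i hi)).2
  rw [l2_restr, ← Real.sqrt_sq hb, ← Real.sqrt_mul (Nat.cast_nonneg _)]
  exact Real.sqrt_le_sqrt hsum

end restr

section RIP

variable {m N K : ℕ} {A : Matrix (Fin m) (Fin N) ℝ} {δ : ℝ}

lemma RIP.mono {L : ℕ} (hA : RIP A K δ) (hLK : L ≤ K) : RIP A L δ :=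
  fun z hz => hA z (hz.trans hLK)

lemma RIP.le_l2_mulVec_restr (hA : RIP A K δ) {S : Finset (Fin N)} (hS : S.card ≤ K)
    (v : Fin N → ℝ) : (1 - δ) * l2 (restr S v) ≤ l2 (A.mulVec (restr S v)) :=
  (hA _ ((card_supp_restr_le S v).trans hS)).1

lemma RIP.l2_mulVec_restr_le (hA : RIP A K δ) {S : Finset (Fin N)} (hS : S.card ≤ K)
    (v : Fin N → ℝ) : l2 (A.mulVec (restr S v)) ≤ (1 + δ) * l2 (restr S v) :=
  (hA _ ((card_supp_restr_le S v).trans hS)).2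

end RIP

lemma exists_dominating_subset_card_eq_min {α : Type*} [DecidableEq α] (w : α → ℝ) (n : ℕ) (S : Finset α) :
    ∃ T ⊆ S, T.card = min n S.card ∧ ∀ j ∈ S \ T, ∀ i ∈ T, w j ≤ w i := by
  induction n generalizing S with
  | zero => exact ⟨∅, by simp⟩
  | succ n ih =>
    rcases S.eq_empty_or_nonempty with rfl | hS
    · exact ⟨∅, by simp⟩
    obtain ⟨a, haS, ha⟩ := S.exists_max_image w hS
    obtain ⟨T, hTS, hTcard, hT⟩ := ih (S.erase a)
    have haT : a ∉ T := fun haT => by simpa using hTS haT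
    refine ⟨insert a T, insert_subset haS (hTS.trans (erase_subset a S)), ?_, ?_⟩
    · rw [card_insert_of_notMem haT, hTcard, card_erase_of_mem haS]
      have := card_pos.mpr hS
      omega
    · intro j hj i hi
      simp only [mem_sdiff, mem_insert, not_or] at hj
      rcases mem_insert.mp hi with rfl | hiT
      · exact ha j hj.1
      · exact hT j (by simp [mem_sdiff, hj]) i hiT

lemma exists_head_block {N : ℕ} (v : Fin N → ℝ) {h : ℕ} (hh : 0 < h) (S : Finset (Fin N)) :
    ∃ T ⊆ S, T.card ≤ h ∧ (S.Nonempty → T.Nonempty) ∧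
      ∃ b, 0 ≤ b ∧ (∀ i ∈ S \ T, |v i| ≤ b) ∧ h * b ≤ l1 (restr T v) := by
  obtain ⟨T, hTS, hTcard, hT⟩ := exists_dominating_subset_card_eq_min (fun i => |v i|) h S
  refine ⟨T, hTS, hTcard ▸ min_le_left _ _, fun hS => card_pos.mp ?_, ?_⟩
  · rw [hTcard]; exact lt_min hh (card_pos.mpr hS)
  by_cases hTh : T.card = h
  · obtain ⟨i₀, hi₀, hmin⟩ := T.exists_min_image (fun i => |v i|) (card_pos.mp (hTh ▸ hh))
    refine ⟨|v i₀|, abs_nonneg _, fun j hj => hT j hj i₀ hi₀, ?_⟩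
    rw [l1_restr, ← hTh, ← nsmul_eq_mul, ← sum_const]
    exact sum_le_sum hmin
  · have hST : S \ T = ∅ := by
      rw [sdiff_eq_empty_iff_subset]
      exact (eq_of_subset_of_card_le hTS (by omega)).ge
    exact ⟨0, le_rfl, by simp [hST], by simpa using l1_nonneg _⟩

lemma sqrt_mul_l2_mulVec_restr_le {m N h : ℕ} {A : Matrix (Fin m) (Fin N) ℝ} {δ : ℝ}
    (hA : RIP A h δ) (hδ : 0 ≤ 1 + δ) (hh : 0 < h) (v : Fin N → ℝ) (S : Finset (Fin N))
    {b : ℝ} (hb : 0 ≤ b) (hbv : ∀ i ∈ S, |v i| ≤ b) :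
    Real.sqrt h * l2 (A.mulVec (restr S v)) ≤ (1 + δ) * (h * b + l1 (restr S v)) := by
  induction S using Finset.strongInduction generalizing b with
  | H S ih =>
    rcases S.eq_empty_or_nonempty with rfl | hS
    · have := l1_nonneg (restr ∅ v)
      rw [restr_empty, Matrix.mulVec_zero, l2_zero, mul_zero]
      positivity
    obtain ⟨T, hTS, hTh, hTne, b', hb', hb'v, hb'T⟩ := exists_head_block v hh S
    have hR := ih (S \ T) (sdiff_ssubset hTS (hTne hS)) hb' hb'v
    have hT : l2 (A.mulVec (restr T v)) ≤ (1 + δ) * (Real.sqrt h * b) := by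
      refine (hA.l2_mulVec_restr_le hTh v).trans (mul_le_mul_of_nonneg_left ?_ hδ)
      calc l2 (restr T v) ≤ Real.sqrt T.card * b :=
            l2_restr_le_sqrt_card_mul hb fun i hi => hbv i (hTS hi)
        _ ≤ Real.sqrt h * b := by gcongr
    have hsqrt : Real.sqrt h * Real.sqrt h = h := Real.mul_self_sqrt (Nat.cast_nonneg _)
    calc Real.sqrt h * l2 (A.mulVec (restr S v))
        ≤ Real.sqrt h * l2 (A.mulVec (restr T v)) +
            Real.sqrt h * l2 (A.mulVec (restr (S \ T) v)) := by
          rw [← restr_add_restr_sdiff hTS, Matrix.mulVec_add, ← mul_add]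
          gcongr
          exact l2_add_le _ _
      _ ≤ Real.sqrt h * ((1 + δ) * (Real.sqrt h * b)) +
            (1 + δ) * (h * b' + l1 (restr (S \ T) v)) := by gcongr
      _ ≤ (1 + δ) * (h * b + l1 (restr S v)) := by
          rw [← l1_restr_add_restr_sdiff hTS]
          have := mul_le_mul_of_nonneg_left hb'T hδ
          linear_combination (1 + δ) * b * hsqrt + this

lemma sqrt_mul_l2_mulVec_restr_sdiff_le {m N h : ℕ} {A : Matrix (Fin m) (Fin N) ℝ} {δ : ℝ}
    (hA : RIP A h δ) (hδ : 0 ≤ 1 + δ) (hh : 0 < h) (v : Fin N → ℝ) {S T : Finset (Fin N)}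
    (hTS : T ⊆ S) {b : ℝ} (hb : 0 ≤ b) (hbv : ∀ i ∈ S \ T, |v i| ≤ b)
    (hbT : h * b ≤ l1 (restr T v)) :
    Real.sqrt h * l2 (A.mulVec (restr (S \ T) v)) ≤ (1 + δ) * l1 (restr S v) := by
  have := mul_le_mul_of_nonneg_left hbT hδ
  rw [← l1_restr_add_restr_sdiff hTS]
  linarith [sqrt_mul_l2_mulVec_restr_le hA hδ hh v (S \ T) hb hbv]

theorem stmt8_general {m N : ℕ} (A : Matrix (Fin m) (Fin N) ℝ) (k h : ℕ)
    (hh : 0 < h) (δ : ℝ) (hδ0 : 0 < δ) (hδ1 : δ < 1)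
    (hRIP : RIP A (k + h) δ) :
    NSP A k (Real.sqrt ((k : ℝ) / h) * (1 + δ) / (1 - δ)) := by
  intro z hz Λ hΛ
  obtain ⟨T, hTΛ, hTh, -, b, hb, hbv, hbT⟩ := exists_head_block z hh Λᶜ
  set W := Λ ∪ T
  have hWc : Wᶜ = Λᶜ \ T := by rw [compl_union, sdiff_eq, inf_eq_inter]
  have hker : A.mulVec (restr W z) = -A.mulVec (restr Wᶜ z) := by
    rw [eq_neg_iff_add_eq_zero, ← Matrix.mulVec_add, restr_add_restr_compl, hz]
  have hlow : (1 - δ) * l2 (restr W z) ≤ l2 (A.mulVec (restr Wᶜ z)) := by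
    rw [← l2_neg (A.mulVec _), ← hker]
    exact hRIP.le_l2_mulVec_restr ((card_union_le _ _).trans (by omega)) z
  have htail : Real.sqrt h * l2 (A.mulVec (restr Wᶜ z)) ≤ (1 + δ) * l1 (restr Λᶜ z) :=
    hWc ▸ sqrt_mul_l2_mulVec_restr_sdiff_le (hRIP.mono (by omega)) (by linarith) hh z hTΛ hb
      hbv hbT
  have hΛW : l1 (restr Λ z) ≤ Real.sqrt k * l2 (restr W z) :=
    (l1_restr_le_sqrt_card_mul_l2_restr Λ z).trans <| mul_le_mul
      (Real.sqrt_le_sqrt (by exact_mod_cast hΛ)) (l2_restr_mono subset_union_left z)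
      (Real.sqrt_nonneg _) (Real.sqrt_nonneg _)
  have hsh : 0 < Real.sqrt h := Real.sqrt_pos.mpr (by exact_mod_cast hh)
  have hW : l2 (restr W z) ≤ (1 + δ) * l1 (restr Λᶜ z) / ((1 - δ) * Real.sqrt h) := by
    rw [le_div_iff₀ (mul_pos (by linarith) hsh)]
    linarith [mul_le_mul_of_nonneg_left hlow hsh.le]
  calc l1 (restr Λ z) ≤ Real.sqrt k * l2 (restr W z) := hΛW
    _ ≤ Real.sqrt k * ((1 + δ) * l1 (restr Λᶜ z) / ((1 - δ) * Real.sqrt h)) := by gcongr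
    _ = Real.sqrt ((k : ℝ) / h) * (1 + δ) / (1 - δ) * l1 (restr Λᶜ z) := by
        rw [Real.sqrt_div (Nat.cast_nonneg _)]
        field_simp

theorem stmt8 {m N : ℕ} (A : Matrix (Fin m) (Fin N) ℝ) (k h : ℕ)
    (hk : 0 < k) (hh : 0 < h) (δ : ℝ) (hδ0 : 0 < δ) (hδ1 : δ < 1)
    (hRIP : RIP A (k + h) δ) :
    NSP A k (Real.sqrt ((k : ℝ) / h) * (1 + δ) / (1 - δ)) :=
  stmt8_general A k h hh δ hδ0 hδ1 hRIP
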